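/- arXiv:2312.10107 — 3 statements merged into one kernel-verified Lean document; each statement's English description precedes it below -/
import Mathlib

section
/- (Remark after Theorem 2.1) Assume Y ⊥ S | (X, E) and that there is a measurable function g with E = g ∘ S (the environment is perfectly recoverable from the context set S). Then Y ⊥ S | X holds if and only if Y ⊥ E | X holds; that is, under perfect recovery of E from S, the context set S is conditionally dependent on Y given X exactly when the environment E is. -/
/-!
If `E = g ∘ S` then `σ(E) ≤ σ(S)`, so `Y ⟂ S ∣ X` gives `Y ⟂ E ∣ X` at once. The converse is the
contraction property of conditional independence. From `Y ⟂ E ∣ X` one gets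
`P(Y ∈ A ∣ X, E) = P(Y ∈ A ∣ X)`, by checking the defining integral identity on the π-system of
sets `a ∩ b` with `a ∈ σ(X)`, `b ∈ σ(E)`. Conditioning the factorisation supplied by
`Y ⟂ S ∣ (X, E)` down to `σ(X)` with the tower property then yields `Y ⟂ S ∣ X`.
-/

open MeasureTheory ProbabilityTheory

theorem IsPiSystem.image2_inter {α : Type*} {C D : Set (Set α)}
    (hC : IsPiSystem C) (hD : IsPiSystem D) : IsPiSystem (Set.image2 (· ∩ ·) C D) := by
  rintro _ ⟨a, ha, b, hb, rfl⟩ _ ⟨c, hc, d, hd, rfl⟩ hne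
  have hne' : (a ∩ c ∩ (b ∩ d)).Nonempty := hne.mono fun x hx => ⟨⟨hx.1.1, hx.2.1⟩, hx.1.2, hx.2.2⟩
  refine ⟨a ∩ c, hC a ha c hc (hne'.mono Set.inter_subset_left), b ∩ d,
    hD b hb d hd (hne'.mono Set.inter_subset_right), ?_⟩
  simp only [Set.inter_inter_inter_comm]

theorem MeasurableSpace.sup_eq_generateFrom_image2_inter {Ω : Type*} (m₁ m₂ : MeasurableSpace Ω) :
    m₁ ⊔ m₂ = generateFrom
      (Set.image2 (· ∩ ·) {a | MeasurableSet[m₁] a} {b | MeasurableSet[m₂] b}) := by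
  refine le_antisymm (sup_le ?_ ?_) (generateFrom_le ?_)
  · exact fun a ha => measurableSet_generateFrom ⟨a, ha, Set.univ, .univ, Set.inter_univ a⟩
  · exact fun b hb => measurableSet_generateFrom ⟨Set.univ, .univ, b, hb, Set.univ_inter b⟩
  · rintro _ ⟨a, ha, b, hb, rfl⟩
    exact (le_sup_left (b := m₂) a ha).inter (le_sup_right (a := m₁) b hb)

theorem MeasureTheory.setIntegral_eq_of_isPiSystem {Ω E : Type*} [NormedAddCommGroup E]
    [NormedSpace ℝ E] {m m₀ : MeasurableSpace Ω} {μ : Measure Ω} (hm : m ≤ m₀)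
    {C : Set (Set Ω)} (h_gen : m = MeasurableSpace.generateFrom C) (h_pi : IsPiSystem C)
    {f g : Ω → E} (hf : Integrable f μ) (hg : Integrable g μ)
    (h_univ : ∫ x, f x ∂μ = ∫ x, g x ∂μ) (h_basic : ∀ t ∈ C, ∫ x in t, f x ∂μ = ∫ x in t, g x ∂μ)
    {t : Set Ω} (ht : MeasurableSet[m] t) : ∫ x in t, f x ∂μ = ∫ x in t, g x ∂μ := by
  induction t, ht using MeasurableSpace.induction_on_inter h_gen h_pi with
  | empty => simp
  | basic t ht => exact h_basic t ht
  | compl t ht ih => rw [setIntegral_compl (hm t ht) hf, setIntegral_compl (hm t ht) hg, ih, h_univ]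
  | iUnion t hdisj ht ih =>
    rw [integral_iUnion (fun i => hm _ (ht i)) hdisj hf.integrableOn,
      integral_iUnion (fun i => hm _ (ht i)) hdisj hg.integrableOn]
    exact tsum_congr ih

theorem ProbabilityTheory.ae_norm_condExp_indicator_le_one {Ω : Type*}
    {m m₀ : MeasurableSpace Ω} (μ : Measure Ω) (s : Set Ω) : ∀ᵐ x ∂μ, ‖(μ⟦s | m⟧) x‖ ≤ 1 := by
  have h_bdd : ∀ x, |s.indicator (fun _ => (1 : ℝ)) x| ≤ 1 := fun x => by
    by_cases hx : x ∈ s <;> simp [hx]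
  simpa only [Real.norm_eq_abs] using ae_bdd_abs_condExp_of_ae_bdd_abs (m := m) (ae_of_all μ h_bdd)

namespace ProbabilityTheory

variable {Ω : Type*} {m m₁ m₂ m₃ : MeasurableSpace Ω} {mΩ : MeasurableSpace Ω}
  [StandardBorelSpace Ω] {hm : m ≤ mΩ} {μ : Measure Ω} [IsFiniteMeasure μ]

theorem CondIndep.condExp_indicator_sup_ae_eq (h : CondIndep m m₁ m₂ hm μ)
    (hm₁ : m₁ ≤ mΩ) (hm₂ : m₂ ≤ mΩ) {s : Set Ω} (hs : MeasurableSet[m₁] s) :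
    μ⟦s | m ⊔ m₂⟧ =ᵐ[μ] μ⟦s | m⟧ := by
  rw [condIndep_iff _ _ _ hm hm₁ hm₂] at h
  have hs₀ : MeasurableSet s := hm₁ s hs
  have h_int : ∀ {t : Set Ω}, MeasurableSet t → Integrable (t.indicator fun _ => (1 : ℝ)) μ :=
    fun ht => (integrable_const 1).indicator ht
  refine (ae_eq_condExp_of_forall_setIntegral_eq (sup_le hm hm₂) (h_int hs₀)
    (fun _ _ _ => integrable_condExp.integrableOn) (fun t ht _ => ?_)
    (stronglyMeasurable_condExp.mono (le_sup_left : m ≤ m ⊔ m₂)).aestronglyMeasurable).symm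
  refine setIntegral_eq_of_isPiSystem (sup_le hm hm₂)
    (MeasurableSpace.sup_eq_generateFrom_image2_inter m m₂)
    (.image2_inter (@MeasurableSpace.isPiSystem_measurableSet _ m)
      (@MeasurableSpace.isPiSystem_measurableSet _ m₂))
    integrable_condExp (h_int hs₀) (integral_condExp hm) ?_ ht
  rintro _ ⟨a, ha, b, hb, rfl⟩
  have hb₀ : MeasurableSet b := hm₂ b hb
  have h_restrict : b.indicator (μ⟦s | m⟧) = μ⟦s | m⟧ * b.indicator fun _ => (1 : ℝ) := by
    ext x; by_cases hx : x ∈ b <;> simp [hx]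
  have h_pull : μ[μ⟦s | m⟧ * b.indicator (fun _ => (1 : ℝ)) | m] =ᵐ[μ] μ⟦s | m⟧ * μ⟦b | m⟧ :=
    condExp_stronglyMeasurable_mul_of_bound hm stronglyMeasurable_condExp (h_int hb₀) 1
      (ae_norm_condExp_indicator_le_one μ s)
  calc ∫ x in a ∩ b, (μ⟦s | m⟧) x ∂μ
      = ∫ x in a, (μ⟦s | m⟧ * b.indicator fun _ => (1 : ℝ)) x ∂μ := by
        rw [← setIntegral_indicator hb₀, ← h_restrict]
    _ = ∫ x in a, (μ[μ⟦s | m⟧ * b.indicator (fun _ => (1 : ℝ)) | m]) x ∂μ := by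
        refine (setIntegral_condExp hm ?_ ha).symm
        rw [← h_restrict]
        exact integrable_condExp.indicator hb₀
    _ = ∫ x in a, (μ⟦s ∩ b | m⟧) x ∂μ :=
        integral_congr_ae (ae_restrict_of_ae (h_pull.trans (h s b hs hb).symm))
    _ = ∫ x in a ∩ b, s.indicator (fun _ => (1 : ℝ)) x ∂μ := by
        rw [setIntegral_condExp hm (h_int (hs₀.inter hb₀)) ha, ← setIntegral_indicator hb₀,
          Set.indicator_indicator, Set.inter_comm]

theorem CondIndep.of_condIndep_sup {hm' : m ⊔ m₂ ≤ mΩ} (h₁₂ : CondIndep m m₁ m₂ hm μ)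
    (h₁₃ : CondIndep (m ⊔ m₂) m₁ m₃ hm' μ) (hm₁ : m₁ ≤ mΩ) (hm₂ : m₂ ≤ mΩ) (hm₃ : m₃ ≤ mΩ) :
    CondIndep m m₁ m₃ hm μ := by
  rw [condIndep_iff _ _ _ hm hm₁ hm₃]
  rw [condIndep_iff _ _ _ hm' hm₁ hm₃] at h₁₃
  intro s t hs ht
  calc μ⟦s ∩ t | m⟧
      =ᵐ[μ] μ[μ⟦s ∩ t | m ⊔ m₂⟧ | m] := (condExp_condExp_of_le le_sup_left hm').symm
    _ =ᵐ[μ] μ[μ⟦s | m ⊔ m₂⟧ * μ⟦t | m ⊔ m₂⟧ | m] := condExp_congr_ae (h₁₃ s t hs ht)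
    _ =ᵐ[μ] μ[μ⟦s | m⟧ * μ⟦t | m ⊔ m₂⟧ | m] :=
        condExp_congr_ae ((h₁₂.condExp_indicator_sup_ae_eq hm₁ hm₂ hs).mul .rfl)
    _ =ᵐ[μ] μ⟦s | m⟧ * μ[μ⟦t | m ⊔ m₂⟧ | m] :=
        condExp_stronglyMeasurable_mul_of_bound hm stronglyMeasurable_condExp integrable_condExp 1
          (ae_norm_condExp_indicator_le_one μ s)
    _ =ᵐ[μ] μ⟦s | m⟧ * μ⟦t | m⟧ := .mul .rfl (condExp_condExp_of_le le_sup_left hm')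

end ProbabilityTheory

theorem remark_after_theorem_2_1_general
    {Ω : Type*} [MeasurableSpace Ω] [StandardBorelSpace Ω]
    (μ : Measure Ω) [IsProbabilityMeasure μ]
    {𝒳 𝒴 ℰ 𝒮 : Type*}
    [MeasurableSpace 𝒳] [MeasurableSpace 𝒴] [MeasurableSpace ℰ] [MeasurableSpace 𝒮]
    (X : Ω → 𝒳) (Y : Ω → 𝒴) (E : Ω → ℰ) (S : Ω → 𝒮)
    (hX : Measurable X) (hY : Measurable Y) (hE : Measurable E) (hS : Measurable S)
    -- data-generating model: `Y ⟂ S ∣ (X, E)`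
    (h_model : CondIndepFun
      (MeasurableSpace.comap (fun ω => (X ω, E ω)) inferInstance)
      ((hX.prodMk hE).comap_le) Y S μ)
    -- the environment is a deterministic measurable function of the context set
    (g : 𝒮 → ℰ) (hg : Measurable g) (hgS : E = g ∘ S) :
    -- `Y ⟂ S ∣ X` holds iff `Y ⟂ E ∣ X` holds
    (CondIndepFun (MeasurableSpace.comap X inferInstance) hX.comap_le Y S μ ↔
      CondIndepFun (MeasurableSpace.comap X inferInstance) hX.comap_le Y E μ) := by
  have h_pair : MeasurableSpace.comap (fun ω => (X ω, E ω)) inferInstance =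
      MeasurableSpace.comap X inferInstance ⊔ MeasurableSpace.comap E inferInstance :=
    MeasurableSpace.comap_prodMk X E
  simp only [h_pair] at h_model
  refine ⟨fun hYS => hgS ▸ hYS.comp measurable_id hg, fun hYE => ?_⟩
  exact CondIndep.of_condIndep_sup hYE h_model hY.comap_le hE.comap_le hS.comap_le

/-- **Remark after Theorem 2.1** (marginal transfer learning, Kühmichel et al.).
Let `X, Y, E, S` be random variables on a probability space `Ω` taking values in
standard Borel spaces.  Assume the data-generating model `Y ⟂ S ∣ (X, E)` and
that the environment is perfectly recoverable from the context set: `E = g ∘ S`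
for a measurable `g`.  Then `Y ⟂ S ∣ X` holds if and only if `Y ⟂ E ∣ X` holds. -/
theorem remark_after_theorem_2_1
    {Ω : Type*} [MeasurableSpace Ω] [StandardBorelSpace Ω] [Nonempty Ω]
    (μ : Measure Ω) [IsProbabilityMeasure μ]
    {𝒳 𝒴 ℰ 𝒮 : Type*}
    [MeasurableSpace 𝒳] [StandardBorelSpace 𝒳]
    [MeasurableSpace 𝒴] [StandardBorelSpace 𝒴]
    [MeasurableSpace ℰ] [StandardBorelSpace ℰ]
    [MeasurableSpace 𝒮] [StandardBorelSpace 𝒮]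
    (X : Ω → 𝒳) (Y : Ω → 𝒴) (E : Ω → ℰ) (S : Ω → 𝒮)
    (hX : Measurable X) (hY : Measurable Y) (hE : Measurable E) (hS : Measurable S)
    -- data-generating model: `Y ⟂ S ∣ (X, E)`
    (h_model : CondIndepFun
      (MeasurableSpace.comap (fun ω => (X ω, E ω)) inferInstance)
      ((hX.prodMk hE).comap_le) Y S μ)
    -- the environment is a deterministic measurable function of the context set
    (g : 𝒮 → ℰ) (hg : Measurable g) (hgS : E = g ∘ S) :
    -- `Y ⟂ S ∣ X` holds iff `Y ⟂ E ∣ X` holds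
    (CondIndepFun (MeasurableSpace.comap X inferInstance) hX.comap_le Y S μ ↔
      CondIndepFun (MeasurableSpace.comap X inferInstance) hX.comap_le Y E μ) :=
  remark_after_theorem_2_1_general μ X Y E S hX hY hE hS h_model g hg hgS
end

section
/- (Theorem A.1(d), generalization of Theorem 2.1 to noisy environments) Let X and Y be finite-valued random variables, S a random variable with values in a nonempty finite type 𝒮, Z : Ω → ℝ a random variable taking finitely many real values, and g : 𝒮 → ℝ a function; define the real-valued random variable E := g ∘ S + Z (which takes finitely many values). Assume S ⊥ Z | X, S ⊥ Z | (X, Y), and I(Y; E | X) > I(Y; Z | X). Then Y and S are NOT conditionally independent given X; equivalently, I(Y; S | X) > 0. -/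
open MeasureTheory

namespace MarginalTransfer

variable {Ω : Type*} [MeasurableSpace Ω]

/-- `P(A) := μ(A)`, as a real number. -/
noncomputable def pr (μ : Measure Ω) (A : Set Ω) : ℝ := (μ A).toReal

/-- Conditional mutual information
`I(U;V|W) := Σ_{u,v,w} P(U=u, V=v, W=w) ·
  log( (P(U=u, V=v, W=w) · P(W=w)) / (P(U=u, W=w) · P(V=v, W=w)) )`
for finitely-valued random variables; any summand whose leading factor
`P(U=u, V=v, W=w)` is zero vanishes. -/
noncomputable def condMI {α β γ : Type*} (μ : Measure Ω)
    (U : Ω → α) (V : Ω → β) (W : Ω → γ) : ℝ :=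
  ∑' u : α, ∑' v : β, ∑' w : γ,
    pr μ {ω | U ω = u ∧ V ω = v ∧ W ω = w} *
      Real.log (pr μ {ω | U ω = u ∧ V ω = v ∧ W ω = w} * pr μ {ω | W ω = w} /
        (pr μ {ω | U ω = u ∧ W ω = w} * pr μ {ω | V ω = v ∧ W ω = w}))

/-- Unconditional mutual information `I(U;V)`: the same formula with `W` a
constant random variable. -/
noncomputable def mutualInfo {α β : Type*} (μ : Measure Ω)
    (U : Ω → α) (V : Ω → β) : ℝ :=
  condMI μ U V (fun _ => (() : Unit))

/-- Conditional independence `U ⟂ V ∣ W`: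
`P(U=u, V=v, W=w) · P(W=w) = P(U=u, W=w) · P(V=v, W=w)` for all `u, v, w`. -/
def CondIndep {α β γ : Type*} (μ : Measure Ω)
    (U : Ω → α) (V : Ω → β) (W : Ω → γ) : Prop :=
  ∀ u v w,
    pr μ {ω | U ω = u ∧ V ω = v ∧ W ω = w} * pr μ {ω | W ω = w} =
      pr μ {ω | U ω = u ∧ W ω = w} * pr μ {ω | V ω = v ∧ W ω = w}

/-- Unconditional independence `U ⟂ V`: conditional independence given a
constant random variable. -/
def Indep {α β : Type*} (μ : Measure Ω) (U : Ω → α) (V : Ω → β) : Prop :=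
  CondIndep μ U V (fun _ => (() : Unit))

/-- Shannon entropy `H(U) := −Σ_u P(U=u) · log P(U=u)`. -/
noncomputable def entropy {α : Type*} (μ : Measure Ω) (U : Ω → α) : ℝ :=
  -∑' u : α, pr μ {ω | U ω = u} * Real.log (pr μ {ω | U ω = u})

/-- Conditional Shannon entropy
`H(U|V) := −Σ_{u,v} P(U=u, V=v) · log( P(U=u, V=v) / P(V=v) )`. -/
noncomputable def condEntropy {α β : Type*} (μ : Measure Ω)
    (U : Ω → α) (V : Ω → β) : ℝ :=
  -∑' u : α, ∑' v : β,
    pr μ {ω | U ω = u ∧ V ω = v} *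
      Real.log (pr μ {ω | U ω = u ∧ V ω = v} / pr μ {ω | V ω = v})

end MarginalTransfer


/-!
Suppose `Y ⟂ S ∣ X`. Together with `S ⟂ Z ∣ (X, Y)`, the contraction property of conditional
independence gives `(Y, Z) ⟂ S ∣ X`. Since `E` is a function of `(Z, S)`, the log-sum inequality
(data processing) gives `I(Y; E ∣ X) ≤ I(Y; (Z, S) ∣ X)`, and the two conditional independences
`(Y, Z) ⟂ S ∣ X`, `Z ⟂ S ∣ X` make the summands of `I(Y; (Z, S) ∣ X)` those of `I(Y; Z ∣ X)`, so
`I(Y; E ∣ X) ≤ I(Y; Z ∣ X)`, a contradiction. Finally `I(Y; S ∣ X)` is the relative entropy of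
the joint law against the conditionally independent coupling, which is positive by Gibbs'
inequality as soon as the two differ.
-/

namespace MarginalTransfer

open Real

section LogSum

variable {ι : Type*} {s : Finset ι} {p q : ι → ℝ}

theorem sub_le_mul_log_div {a b : ℝ} (ha : 0 ≤ a) (hb : 0 ≤ b) (hab : a ≠ 0 → b ≠ 0) :
    a - b ≤ a * log (a / b) := by
  rcases ha.eq_or_lt with rfl | ha
  · simpa using hb
  have hb : 0 < b := hb.lt_of_ne' (hab ha.ne')
  have := log_le_sub_one_of_pos (div_pos hb ha)
  rw [← neg_neg (log (a / b)), ← log_inv, inv_div]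
  nlinarith [mul_div_cancel₀ b ha.ne']

theorem sub_lt_mul_log_div {a b : ℝ} (ha : 0 ≤ a) (hb : 0 ≤ b) (hab : a ≠ 0 → b ≠ 0)
    (hne : a ≠ b) : a - b < a * log (a / b) := by
  rcases ha.eq_or_lt with rfl | ha
  · simpa using hb.lt_of_ne hne
  have hb : 0 < b := hb.lt_of_ne' (hab ha.ne')
  have := log_lt_sub_one_of_pos (div_pos hb ha) (by rwa [ne_eq, div_eq_one_iff_eq ha.ne', eq_comm])
  rw [← neg_neg (log (a / b)), ← log_inv, inv_div]
  nlinarith [mul_div_cancel₀ b ha.ne']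

theorem sum_sub_sum_le_sum_mul_log_div (hp : ∀ i ∈ s, 0 ≤ p i) (hq : ∀ i ∈ s, 0 ≤ q i)
    (hpq : ∀ i ∈ s, p i ≠ 0 → q i ≠ 0) :
    ∑ i ∈ s, p i - ∑ i ∈ s, q i ≤ ∑ i ∈ s, p i * log (p i / q i) := by
  rw [← Finset.sum_sub_distrib]
  exact Finset.sum_le_sum fun i hi => sub_le_mul_log_div (hp i hi) (hq i hi) (hpq i hi)

theorem sum_sub_sum_lt_sum_mul_log_div (hp : ∀ i ∈ s, 0 ≤ p i) (hq : ∀ i ∈ s, 0 ≤ q i)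
    (hpq : ∀ i ∈ s, p i ≠ 0 → q i ≠ 0) {j : ι} (hj : j ∈ s) (hne : p j ≠ q j) :
    ∑ i ∈ s, p i - ∑ i ∈ s, q i < ∑ i ∈ s, p i * log (p i / q i) := by
  rw [← Finset.sum_sub_distrib]
  exact Finset.sum_lt_sum (fun i hi => sub_le_mul_log_div (hp i hi) (hq i hi) (hpq i hi))
    ⟨j, hj, sub_lt_mul_log_div (hp j hj) (hq j hj) (hpq j hj) hne⟩

theorem sum_mul_log_div_sum_le (hp : ∀ i ∈ s, 0 ≤ p i) (hq : ∀ i ∈ s, 0 ≤ q i)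
    (hpq : ∀ i ∈ s, p i ≠ 0 → q i ≠ 0) :
    (∑ i ∈ s, p i) * log ((∑ i ∈ s, p i) / ∑ i ∈ s, q i) ≤ ∑ i ∈ s, p i * log (p i / q i) := by
  set P := ∑ i ∈ s, p i with hPdef
  set Q := ∑ i ∈ s, q i
  rcases (Finset.sum_nonneg hp).eq_or_lt with hP | hP
  · rw [hPdef, ← hP, zero_mul]
    exact Finset.sum_nonneg fun i hi => by
      rw [(Finset.sum_eq_zero_iff_of_nonneg hp).1 hP.symm i hi, zero_mul]
  obtain ⟨j, hj, hpj⟩ := Finset.exists_ne_zero_of_sum_ne_zero hP.ne'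
  have hQ : 0 < Q := ((hq j hj).lt_of_ne' (hpq j hj hpj)).trans_le (Finset.single_le_sum hq hj)
  have hc : 0 < P / Q := div_pos hP hQ
  -- Gibbs' inequality for `p` against `q` rescaled to the same total mass `P`.
  have hscaled := sum_sub_sum_le_sum_mul_log_div (q := fun i => q i * (P / Q)) hp
    (fun i hi => mul_nonneg (hq i hi) hc.le) (fun i hi h => mul_ne_zero (hpq i hi h) hc.ne')
  have hsplit : ∀ i ∈ s, p i * log (p i / (q i * (P / Q))) =
      p i * log (p i / q i) - p i * log (P / Q) := by
    intro i hi
    rcases (hp i hi).eq_or_lt with h | h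
    · simp [← h]
    rw [← div_div, log_div (div_pos h ((hq i hi).lt_of_ne' (hpq i hi h.ne'))).ne' hc.ne']
    ring
  have hQP : Q * (P / Q) = P := mul_div_cancel₀ P hQ.ne'
  rw [Finset.sum_congr rfl hsplit, ← Finset.sum_mul, hQP, Finset.sum_sub_distrib,
    ← Finset.sum_mul, ← hPdef] at hscaled
  linarith

end LogSum

variable {Ω : Type*} [MeasurableSpace Ω] {μ : Measure Ω} {α β γ δ : Type*}

section Probability

theorem pr_nonneg (A : Set Ω) : 0 ≤ pr μ A := measureReal_nonneg

variable [IsFiniteMeasure μ] {P Q : Ω → Prop}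

theorem pr_pos_of_imp (hPQ : ∀ ω, P ω → Q ω) (hP : pr μ {ω | P ω} ≠ 0) :
    0 < pr μ {ω | Q ω} :=
  ((pr_nonneg _).lt_of_ne' hP).trans_le (measureReal_mono (Set.ofPred_subset_ofPred.2 hPQ))

theorem pr_eq_zero_of_imp (hPQ : ∀ ω, P ω → Q ω) (hQ : pr μ {ω | Q ω} = 0) :
    pr μ {ω | P ω} = 0 :=
  le_antisymm (hQ ▸ measureReal_mono (Set.ofPred_subset_ofPred.2 hPQ)) (pr_nonneg _)

theorem pr_eq_sum_pr_and {V : Ω → β} (t : Finset β) (hP : ∀ ω, P ω → V ω ∈ t)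
    (hm : ∀ b ∈ t, MeasurableSet {ω | V ω = b ∧ P ω}) :
    pr μ {ω | P ω} = ∑ b ∈ t, pr μ {ω | V ω = b ∧ P ω} := by
  have hunion : {ω | P ω} = ⋃ b ∈ t, {ω | V ω = b ∧ P ω} := by
    ext ω
    simp only [Set.mem_ofPred_eq, Set.mem_iUnion, exists_prop]
    exact ⟨fun h => ⟨V ω, hP ω h, rfl, h⟩, fun ⟨_, _, _, h⟩ => h⟩
  rw [pr, hunion]
  refine measureReal_biUnion_finset (fun b _ c _ hbc => ?_) hm
  exact Set.disjoint_left.2 fun ω hb hc => hbc (hb.1.symm.trans hc.1)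

variable [MeasurableSpace β] [MeasurableSingletonClass β] {V : Ω → β}

theorem sum_pr_eq_and [Fintype β] (hV : Measurable V) (hP : MeasurableSet {ω | P ω}) :
    ∑ b, pr μ {ω | V ω = b ∧ P ω} = pr μ {ω | P ω} :=
  (pr_eq_sum_pr_and Finset.univ (fun _ _ => Finset.mem_univ _)
    fun b _ => (hV (measurableSet_singleton b)).inter hP).symm

theorem sum_pr_eq [IsProbabilityMeasure μ] [Fintype β] (hV : Measurable V) :
    ∑ b, pr μ {ω | V ω = b} = 1 := by
  simpa [pr] using sum_pr_eq_and (μ := μ) hV (P := fun _ => True) MeasurableSet.univ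

theorem pr_eq_sum_filter [DecidableEq δ] (hV : Measurable V) (hP : MeasurableSet {ω | P ω})
    (t : Finset β) (ht : ∀ ω, V ω ∈ t) (f : β → δ) (e : δ) :
    pr μ {ω | f (V ω) = e ∧ P ω} = ∑ b ∈ t.filter (f · = e), pr μ {ω | V ω = b ∧ P ω} := by
  have hfiber : ∀ b ∈ t.filter (f · = e),
      {ω | V ω = b ∧ f (V ω) = e ∧ P ω} = {ω | V ω = b ∧ P ω} := fun b hb =>
    Set.ext fun ω => and_congr_right fun hb' => by
      rw [hb', (Finset.mem_filter.1 hb).2, eq_self, true_and]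
  rw [pr_eq_sum_pr_and (t.filter (f · = e)) (fun ω h => Finset.mem_filter.2 ⟨ht ω, h.1⟩)
    fun b hb => hfiber b hb ▸ (hV (measurableSet_singleton b)).inter hP]
  exact Finset.sum_congr rfl fun b hb => by rw [hfiber b hb]

end Probability

section CondIndep

theorem CondIndep.symm {U : Ω → α} {V : Ω → β} {W : Ω → γ} (h : CondIndep μ U V W) :
    CondIndep μ V U W := by
  intro v u w
  have := h u v w
  simp only [and_left_comm] at this ⊢
  linarith

theorem CondIndep.contraction [IsFiniteMeasure μ] {U : Ω → α} {A : Ω → β} {B : Ω → γ}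
    {W : Ω → δ} (hUA : CondIndep μ U A W) (hBA : CondIndep μ B A (fun ω => (W ω, U ω))) :
    CondIndep μ (fun ω => (U ω, B ω)) A W := by
  rintro ⟨u, b⟩ a w
  have h1 := hUA u a w
  have h2 := hBA b a (w, u)
  -- list the conjuncts of every event in one canonical order
  simp only [Prod.mk.injEq, and_assoc, and_comm, and_left_comm] at h1 h2 ⊢
  rcases eq_or_ne (pr μ {ω | U ω = u ∧ W ω = w}) 0 with h0 | h0
  · have h4 : pr μ {ω | U ω = u ∧ A ω = a ∧ B ω = b ∧ W ω = w} = 0 :=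
      pr_eq_zero_of_imp (fun _ h => ⟨h.1, h.2.2.2⟩) h0
    have h3 : pr μ {ω | U ω = u ∧ B ω = b ∧ W ω = w} = 0 :=
      pr_eq_zero_of_imp (fun _ h => ⟨h.1, h.2.2⟩) h0
    rw [h4, h3, zero_mul, zero_mul]
  · refine mul_right_cancel₀ h0 ?_
    linear_combination pr μ {ω | W ω = w} * h2 + pr μ {ω | U ω = u ∧ B ω = b ∧ W ω = w} * h1

end CondIndep

/-- The mass of `(u, v, w)` when `U` and `V` are made conditionally independent given `W`;
`condMI` is the relative entropy of the joint law of `(U, V, W)` with respect to it. -/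
noncomputable def condIndepMass (μ : Measure Ω) (U : Ω → α) (V : Ω → β) (W : Ω → γ)
    (u : α) (v : β) (w : γ) : ℝ :=
  pr μ {ω | U ω = u ∧ W ω = w} * pr μ {ω | V ω = v ∧ W ω = w} / pr μ {ω | W ω = w}

section CondIndepMass

variable {U : Ω → α} {V : Ω → β} {W : Ω → γ}

theorem condIndepMass_nonneg (u : α) (v : β) (w : γ) : 0 ≤ condIndepMass μ U V W u v w :=
  div_nonneg (mul_nonneg (pr_nonneg _) (pr_nonneg _)) (pr_nonneg _)

theorem condIndepMass_ne_zero [IsFiniteMeasure μ] {u : α} {v : β} {w : γ}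
    (h : pr μ {ω | U ω = u ∧ V ω = v ∧ W ω = w} ≠ 0) : condIndepMass μ U V W u v w ≠ 0 := by
  have hUW : 0 < pr μ {ω | U ω = u ∧ W ω = w} := pr_pos_of_imp (fun _ h => ⟨h.1, h.2.2⟩) h
  have hVW : 0 < pr μ {ω | V ω = v ∧ W ω = w} := pr_pos_of_imp (fun _ h => h.2) h
  have hW : 0 < pr μ {ω | W ω = w} := pr_pos_of_imp (fun _ h => h.2.2) h
  exact (div_pos (mul_pos hUW hVW) hW).ne'

theorem condIndep_iff_eq_condIndepMass [IsFiniteMeasure μ] :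
    CondIndep μ U V W ↔
      ∀ u v w, pr μ {ω | U ω = u ∧ V ω = v ∧ W ω = w} = condIndepMass μ U V W u v w := by
  refine forall₃_congr fun u v w => ?_
  rcases eq_or_ne (pr μ {ω | W ω = w}) 0 with hW | hW
  · have hUVW : pr μ {ω | U ω = u ∧ V ω = v ∧ W ω = w} = 0 :=
      pr_eq_zero_of_imp (fun _ h => h.2.2) hW
    have hUW : pr μ {ω | U ω = u ∧ W ω = w} = 0 := pr_eq_zero_of_imp (fun _ h => h.2) hW
    simp [condIndepMass, hW, hUVW, hUW]
  · rw [condIndepMass, eq_div_iff hW]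

theorem div_condIndepMass_prod_eq [IsFiniteMeasure μ] {A : Ω → δ}
    (hUV_A : CondIndep μ (fun ω => (U ω, V ω)) A W) (hVA : CondIndep μ V A W)
    {u : α} {v : β} {a : δ} {w : γ}
    (h0 : pr μ {ω | U ω = u ∧ (V ω, A ω) = (v, a) ∧ W ω = w} ≠ 0) :
    pr μ {ω | U ω = u ∧ (V ω, A ω) = (v, a) ∧ W ω = w} /
        condIndepMass μ U (fun ω => (V ω, A ω)) W u (v, a) w =
      pr μ {ω | U ω = u ∧ V ω = v ∧ W ω = w} / condIndepMass μ U V W u v w := by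
  have hmass := condIndepMass_ne_zero h0
  have h1 := hUV_A (u, v) a w
  have h2 := hVA v a w
  simp only [condIndepMass, Prod.mk.injEq, and_assoc] at h0 hmass h1 h2 ⊢
  obtain ⟨hUW, hVAW⟩ := mul_ne_zero_iff.1 (div_ne_zero_iff.1 hmass).1
  have hVW : 0 < pr μ {ω | V ω = v ∧ W ω = w} := pr_pos_of_imp (fun _ h => ⟨h.2.1, h.2.2.2⟩) h0
  rw [div_div_eq_mul_div, div_div_eq_mul_div,
    div_eq_div_iff (mul_ne_zero hUW hVAW) (mul_ne_zero hUW hVW.ne')]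
  linear_combination pr μ {ω | U ω = u ∧ W ω = w} * pr μ {ω | V ω = v ∧ W ω = w} * h1 -
    pr μ {ω | U ω = u ∧ V ω = v ∧ W ω = w} * pr μ {ω | U ω = u ∧ W ω = w} * h2

theorem condMI_eq_sum [Fintype α] [Fintype γ] (t : Finset β) (ht : ∀ ω, V ω ∈ t) :
    condMI μ U V W = ∑ u, ∑ v ∈ t, ∑ w, pr μ {ω | U ω = u ∧ V ω = v ∧ W ω = w} *
      log (pr μ {ω | U ω = u ∧ V ω = v ∧ W ω = w} / condIndepMass μ U V W u v w) := by
  simp only [condMI, condIndepMass, tsum_fintype, div_div_eq_mul_div]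
  refine Finset.sum_congr rfl fun u _ => tsum_eq_sum fun v hv => Finset.sum_eq_zero fun w _ => ?_
  have hempty : {ω | U ω = u ∧ V ω = v ∧ W ω = w} = ∅ :=
    Set.eq_empty_iff_forall_notMem.2 fun ω h => hv (h.2.1 ▸ ht ω)
  simp [hempty, pr]

end CondIndepMass

section ConditionalMutualInformation

variable [MeasurableSpace α] [MeasurableSingletonClass α] [MeasurableSpace β]
  [MeasurableSingletonClass β] [MeasurableSpace γ] [MeasurableSingletonClass γ]
  {U : Ω → α} {V : Ω → β} {W : Ω → γ}

theorem condMI_pos_of_not_condIndep [IsProbabilityMeasure μ] [Fintype α] [Fintype β] [Fintype γ]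
    (hU : Measurable U) (hV : Measurable V) (hW : Measurable W) (h : ¬ CondIndep μ U V W) :
    0 < condMI μ U V W := by
  obtain ⟨u, v, w, hne⟩ : ∃ u v w,
      pr μ {ω | U ω = u ∧ V ω = v ∧ W ω = w} ≠ condIndepMass μ U V W u v w := by
    simpa [condIndep_iff_eq_condIndepMass] using h
  have hp : ∑ x : α × β × γ, pr μ {ω | U ω = x.1 ∧ V ω = x.2.1 ∧ W ω = x.2.2} = 1 := by
    simpa only [Prod.ext_iff] using sum_pr_eq (μ := μ) (hU.prodMk (hV.prodMk hW))
  have hq : ∑ x : α × β × γ, condIndepMass μ U V W x.1 x.2.1 x.2.2 = 1 := by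
    rw [← sum_pr_eq (μ := μ) hW]
    simp only [Fintype.sum_prod_type_right]
    refine Finset.sum_congr rfl fun w _ => ?_
    simp only [condIndepMass, ← Finset.sum_div, ← Finset.sum_mul, ← Finset.mul_sum]
    have hWw : MeasurableSet {ω | W ω = w} := hW (measurableSet_singleton w)
    rw [sum_pr_eq_and hU hWw, sum_pr_eq_and hV hWw, mul_self_div_self]
  have hgibbs := sum_sub_sum_lt_sum_mul_log_div (s := Finset.univ)
    (p := fun x => pr μ {ω | U ω = x.1 ∧ V ω = x.2.1 ∧ W ω = x.2.2})
    (q := fun x => condIndepMass μ U V W x.1 x.2.1 x.2.2) (fun x _ => pr_nonneg _)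
    (fun x _ => condIndepMass_nonneg x.1 x.2.1 x.2.2)
    (fun x _ => condIndepMass_ne_zero) (Finset.mem_univ (u, v, w)) hne
  rw [hp, hq, sub_self] at hgibbs
  simp only [Fintype.sum_prod_type] at hgibbs
  rwa [condMI_eq_sum Finset.univ fun _ => Finset.mem_univ _]

theorem condMI_comp_le [IsFiniteMeasure μ] [Fintype α] [Fintype γ]
    (hU : Measurable U) (hV : Measurable V) (hW : Measurable W)
    (t : Finset β) (ht : ∀ ω, V ω ∈ t) (f : β → δ) :
    condMI μ U (fun ω => f (V ω)) W ≤ condMI μ U V W := by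
  classical
  rw [condMI_eq_sum (t.image f) fun ω => Finset.mem_image_of_mem f (ht ω), condMI_eq_sum t ht]
  refine Finset.sum_le_sum fun u _ => ?_
  rw [Finset.sum_comm, Finset.sum_comm (s := t)]
  refine Finset.sum_le_sum fun w _ => ?_
  rw [← Finset.sum_fiberwise_of_maps_to (g := f) fun v hv => Finset.mem_image_of_mem f hv]
  refine Finset.sum_le_sum fun e _ => ?_
  have hWw : MeasurableSet {ω | W ω = w} := hW (measurableSet_singleton w)
  have hp : pr μ {ω | U ω = u ∧ f (V ω) = e ∧ W ω = w} =
      ∑ v ∈ t.filter (f · = e), pr μ {ω | U ω = u ∧ V ω = v ∧ W ω = w} := by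
    simpa only [and_left_comm] using
      pr_eq_sum_filter (μ := μ) hV (P := fun ω => U ω = u ∧ W ω = w)
        ((hU (measurableSet_singleton u)).inter hWw) t ht f e
  have hq : condIndepMass μ U (fun ω => f (V ω)) W u e w =
      ∑ v ∈ t.filter (f · = e), condIndepMass μ U V W u v w := by
    simp only [condIndepMass, ← Finset.sum_div, ← Finset.mul_sum]
    rw [pr_eq_sum_filter hV hWw t ht f e]
  rw [hp, hq]
  exact sum_mul_log_div_sum_le (fun _ _ => pr_nonneg _) (fun _ _ => condIndepMass_nonneg _ _ _)
    fun _ _ => condIndepMass_ne_zero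

theorem condMI_prod_eq_of_condIndep [IsFiniteMeasure μ] [Fintype α] [Fintype γ] [Fintype δ]
    [MeasurableSpace δ] [MeasurableSingletonClass δ] {A : Ω → δ}
    (hU : Measurable U) (hA : Measurable A) (hV : Measurable V) (hW : Measurable W)
    (t : Finset β) (ht : ∀ ω, V ω ∈ t)
    (hUV_A : CondIndep μ (fun ω => (U ω, V ω)) A W) (hVA : CondIndep μ V A W) :
    condMI μ U (fun ω => (V ω, A ω)) W = condMI μ U V W := by
  rw [condMI_eq_sum (t ×ˢ Finset.univ) fun ω => Finset.mem_product.2 ⟨ht ω, Finset.mem_univ _⟩,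
    condMI_eq_sum t ht]
  refine Finset.sum_congr rfl fun u _ => ?_
  rw [Finset.sum_product]
  refine Finset.sum_congr rfl fun v _ => ?_
  rw [Finset.sum_comm]
  refine Finset.sum_congr rfl fun w _ => ?_
  have hlog : ∀ a, pr μ {ω | U ω = u ∧ (V ω, A ω) = (v, a) ∧ W ω = w} *
        log (pr μ {ω | U ω = u ∧ (V ω, A ω) = (v, a) ∧ W ω = w} /
          condIndepMass μ U (fun ω => (V ω, A ω)) W u (v, a) w) =
      pr μ {ω | U ω = u ∧ (V ω, A ω) = (v, a) ∧ W ω = w} *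
        log (pr μ {ω | U ω = u ∧ V ω = v ∧ W ω = w} / condIndepMass μ U V W u v w) := by
    intro a
    rcases eq_or_ne (pr μ {ω | U ω = u ∧ (V ω, A ω) = (v, a) ∧ W ω = w}) 0 with h0 | h0
    · rw [h0, zero_mul, zero_mul]
    · rw [div_condIndepMass_prod_eq hUV_A hVA h0]
  have hmarg : ∑ a, pr μ {ω | U ω = u ∧ (V ω, A ω) = (v, a) ∧ W ω = w} =
      pr μ {ω | U ω = u ∧ V ω = v ∧ W ω = w} := by
    simpa only [Prod.mk.injEq, and_assoc, and_left_comm] using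
      sum_pr_eq_and (μ := μ) hA (P := fun ω => U ω = u ∧ V ω = v ∧ W ω = w)
        ((hU (measurableSet_singleton u)).inter
          ((hV (measurableSet_singleton v)).inter (hW (measurableSet_singleton w))))
  rw [Finset.sum_congr rfl fun a _ => hlog a, ← Finset.sum_mul, hmarg]

end ConditionalMutualInformation

end MarginalTransfer

open MarginalTransfer

theorem theorem_A_1_d_general
    {Ω : Type*} [MeasurableSpace Ω] (μ : Measure Ω) [IsProbabilityMeasure μ]
    {𝒳 𝒴 𝒮 : Type*}
    [Fintype 𝒳] [MeasurableSpace 𝒳] [MeasurableSingletonClass 𝒳]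
    [Fintype 𝒴] [MeasurableSpace 𝒴] [MeasurableSingletonClass 𝒴]
    [Fintype 𝒮] [MeasurableSpace 𝒮] [MeasurableSingletonClass 𝒮]
    (X : Ω → 𝒳) (Y : Ω → 𝒴) (S : Ω → 𝒮) (Z : Ω → ℝ)
    (hX : Measurable X) (hY : Measurable Y) (hS : Measurable S) (hZ : Measurable Z)
    (hZfin : (Set.range Z).Finite)
    (g : 𝒮 → ℝ) (E : Ω → ℝ) (hE : E = fun ω => g (S ω) + Z ω)
    (hSZ_X : CondIndep μ S Z X)
    (hSZ_XY : CondIndep μ S Z (fun ω => (X ω, Y ω)))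
    (hMI : condMI μ Y Z X < condMI μ Y E X) :
    ¬ CondIndep μ Y S X ∧ 0 < condMI μ Y S X := by
  subst hE
  have hZT : ∀ ω, Z ω ∈ hZfin.toFinset := fun ω => hZfin.mem_toFinset.2 ⟨ω, rfl⟩
  have hYS : ¬ CondIndep μ Y S X := by
    intro hYS
    have hMI_le : condMI μ Y (fun ω => g (S ω) + Z ω) X ≤ condMI μ Y Z X := calc
      _ ≤ condMI μ Y (fun ω => (Z ω, S ω)) X :=
          condMI_comp_le hY (hZ.prodMk hS) hX (hZfin.toFinset ×ˢ Finset.univ)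
            (fun ω => Finset.mem_product.2 ⟨hZT ω, Finset.mem_univ _⟩) fun p => g p.2 + p.1
      _ = condMI μ Y Z X :=
          condMI_prod_eq_of_condIndep hY hS hZ hX _ hZT (hYS.contraction hSZ_XY.symm)
            hSZ_X.symm
    exact hMI.not_ge hMI_le
  exact ⟨hYS, condMI_pos_of_not_condIndep hY hS hX hYS⟩

/-- **Theorem A.1(d)** (generalization of Theorem 2.1 to noisy environments).
Let `X, Y` be finite-valued random variables, `S` a random variable with values
in a nonempty finite type, `Z : Ω → ℝ` a random variable taking finitely many
real values, and `E := g ∘ S + Z`.  If `S ⟂ Z ∣ X`, `S ⟂ Z ∣ (X, Y)` and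
`I(Y; E ∣ X) > I(Y; Z ∣ X)`, then `Y` and `S` are not conditionally independent
given `X`; equivalently, `I(Y; S ∣ X) > 0`. -/
theorem theorem_A_1_d
    {Ω : Type*} [MeasurableSpace Ω] (μ : Measure Ω) [IsProbabilityMeasure μ]
    {𝒳 𝒴 𝒮 : Type*}
    [Fintype 𝒳] [Nonempty 𝒳] [MeasurableSpace 𝒳] [MeasurableSingletonClass 𝒳]
    [Fintype 𝒴] [Nonempty 𝒴] [MeasurableSpace 𝒴] [MeasurableSingletonClass 𝒴]
    [Fintype 𝒮] [Nonempty 𝒮] [MeasurableSpace 𝒮] [MeasurableSingletonClass 𝒮]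
    (X : Ω → 𝒳) (Y : Ω → 𝒴) (S : Ω → 𝒮) (Z : Ω → ℝ)
    (hX : Measurable X) (hY : Measurable Y) (hS : Measurable S) (hZ : Measurable Z)
    (hZfin : (Set.range Z).Finite)
    (g : 𝒮 → ℝ) (E : Ω → ℝ) (hE : E = fun ω => g (S ω) + Z ω)
    (hSZ_X : CondIndep μ S Z X)
    (hSZ_XY : CondIndep μ S Z (fun ω => (X ω, Y ω)))
    (hMI : condMI μ Y Z X < condMI μ Y E X) :
    ¬ CondIndep μ Y S X ∧ 0 < condMI μ Y S X :=
  theorem_A_1_d_general μ X Y S Z hX hY hS hZ hZfin g E hE hSZ_X hSZ_XY hMI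
end

section
/- (Insufficiency of Criteria 2.2 and 2.3 for Criterion 2.1, Appendix B) For every n ≥ 1 there exist a probability space (Ω, F, μ), nonempty finite types 𝒳, 𝒴, ℰ, and random variables X : Ω → 𝒳, Y : Ω → 𝒴, E : Ω → ℰ, and X₁, …, Xₙ : Ω → 𝒳 with context set S := (X₁, …, Xₙ) : Ω → 𝒳ⁿ, such that: (i) X, X₁, …, Xₙ are conditionally i.i.d. given E, i.e. P(X=x, X₁=x₁, …, Xₙ=xₙ, E=e) · P(E=e)ⁿ = P(X=x, E=e) · ∏_{i=1}^n P(X=x_i, E=e) for all e, x, x₁, …, xₙ; (ii) Y ⊥ S | (X, E); (iii) E and S are NOT conditionally independent given X (Criterion 2.2 holds); (iv) Y and E are NOT conditionally independent given X (Criterion 2.3 holds); and yet (v) Y ⊥ S | X (Criterion 2.1 fails). -/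
open MeasureTheory

open MarginalTransfer

/-!
Let `B` and `Y` be independent fair bits, put `E := (B, Y)`, and let `X, X₁, …, Xₙ` be independent
noisy copies of `B`, each equal to `B` with probability `3/4`. The label `Y` is independent of
`(B, X, S)`, so `Y ⟂ S ∣ X`; and `Y ⟂ S ∣ (X, E)` because `Y` is a coordinate of `E`. Being a
nonconstant function of `E`, `Y` is not independent of `E` given `X`; and as soon as `n ≥ 1` the
copies in `S` carry information about `B` beyond `X`, so `E` and `S` are dependent given `X`.
-/

section WeightedMeasure

variable {Ω : Type*} [Fintype Ω] [MeasurableSpace Ω] [MeasurableSingletonClass Ω]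

noncomputable def weightedMeasure (w : Ω → ℝ) : Measure Ω :=
  ∑ ω, ENNReal.ofReal (w ω) • Measure.dirac ω

variable {w : Ω → ℝ}

theorem weightedMeasure_apply (A : Set Ω) [DecidablePred (· ∈ A)] :
    weightedMeasure w A = ∑ ω with ω ∈ A, ENNReal.ofReal (w ω) := by
  simp [weightedMeasure, Measure.finsetSum_apply, Measure.dirac_apply, Finset.sum_filter,
    Set.indicator_apply]

theorem pr_weightedMeasure (hw : 0 ≤ w) (A : Set Ω) [DecidablePred (· ∈ A)] :
    pr (weightedMeasure w) A = ∑ ω with ω ∈ A, w ω := by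
  rw [pr, weightedMeasure_apply, ← ENNReal.ofReal_sum_of_nonneg fun ω _ ↦ hw ω,
    ENNReal.toReal_ofReal (Finset.sum_nonneg fun ω _ ↦ hw ω)]

theorem isProbabilityMeasure_weightedMeasure (hw : 0 ≤ w) (h1 : ∑ ω, w ω = 1) :
    IsProbabilityMeasure (weightedMeasure w) := by
  classical
  constructor
  rw [weightedMeasure_apply, ← ENNReal.ofReal_sum_of_nonneg fun ω _ ↦ hw ω]
  simp [h1]

end WeightedMeasure

section Product

variable {α β : Type*} [Fintype α] [Fintype β] [MeasurableSpace α] [MeasurableSingletonClass α]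
  [MeasurableSpace β] [MeasurableSingletonClass β] {q : α → ℝ} {r : β → ℝ}

theorem pr_weightedMeasure_prod (hq : 0 ≤ q) (hr : 0 ≤ r) (A : Set α) (B : Set β) :
    pr (weightedMeasure fun ω : α × β ↦ q ω.1 * r ω.2) (A ×ˢ B) =
      pr (weightedMeasure q) A * pr (weightedMeasure r) B := by
  classical
  rw [pr_weightedMeasure (fun ω ↦ mul_nonneg (hq _) (hr _)), pr_weightedMeasure hq,
    pr_weightedMeasure hr, Finset.sum_mul_sum, ← Finset.sum_product', ← Finset.filter_product]
  simp only [Set.mem_prod, Finset.univ_product_univ]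

theorem condIndep_fst_weightedMeasure_prod {γ δ : Type*} (hq : 0 ≤ q) (hr : 0 ≤ r)
    (hq1 : ∑ a, q a = 1) (V : β → γ) (W : β → δ) :
    CondIndep (weightedMeasure fun ω : α × β ↦ q ω.1 * r ω.2) Prod.fst (V ∘ Prod.snd)
      (W ∘ Prod.snd) := by
  intro a v w
  have hprod := pr_weightedMeasure_prod hq hr
  have huniv : pr (weightedMeasure q) Set.univ = 1 := by
    classical
    simp [pr_weightedMeasure hq, hq1]
  rw [show {ω : α × β | ω.1 = a ∧ (V ∘ Prod.snd) ω = v ∧ (W ∘ Prod.snd) ω = w} =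
      {a} ×ˢ {b | V b = v ∧ W b = w} by ext; simp,
    show {ω : α × β | (W ∘ Prod.snd) ω = w} = Set.univ ×ˢ {b | W b = w} by ext; simp,
    show {ω : α × β | ω.1 = a ∧ (W ∘ Prod.snd) ω = w} = {a} ×ˢ {b | W b = w} by ext; simp,
    show {ω : α × β | (V ∘ Prod.snd) ω = v ∧ (W ∘ Prod.snd) ω = w} =
      Set.univ ×ˢ {b | V b = v ∧ W b = w} by ext; simp, hprod, hprod, hprod, hprod, huniv]
  ring

end Product

section CondIndep

variable {Ω α β γ : Type*} [MeasurableSpace Ω] {μ : Measure Ω} {U : Ω → α} {V : Ω → β}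
  {W : Ω → γ}

theorem condIndep_of_eq_comp (f : γ → α) (hU : ∀ ω, U ω = f (W ω)) :
    CondIndep μ U V W := by
  intro u v w
  by_cases hw : f w = u
  · have hUVW : {ω | U ω = u ∧ V ω = v ∧ W ω = w} = {ω | V ω = v ∧ W ω = w} := by
      ext ω; simp only [Set.mem_ofPred_eq, hU]; grind
    have hUW : {ω | U ω = u ∧ W ω = w} = {ω | W ω = w} := by
      ext ω; simp only [Set.mem_ofPred_eq, hU]; grind
    rw [hUVW, hUW, mul_comm]
  · have hUVW : {ω | U ω = u ∧ V ω = v ∧ W ω = w} = ∅ := by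
      ext ω; simp only [Set.mem_ofPred_eq, hU, Set.mem_empty_iff_false, iff_false]; grind
    have hUW : {ω | U ω = u ∧ W ω = w} = ∅ := by
      ext ω; simp only [Set.mem_ofPred_eq, hU, Set.mem_empty_iff_false, iff_false]; grind
    simp [hUVW, hUW, pr]

theorem CondIndep.pr_eq_of_eq_comp (h : CondIndep μ U V W) {f : β → α}
    (hU : ∀ ω, U ω = f (V ω)) {v : β} {w : γ} (hv : pr μ {ω | V ω = v ∧ W ω = w} ≠ 0) :
    pr μ {ω | U ω = f v ∧ W ω = w} = pr μ {ω | W ω = w} := by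
  have hUVW : {ω | U ω = f v ∧ V ω = v ∧ W ω = w} = {ω | V ω = v ∧ W ω = w} := by
    ext ω; simp only [Set.mem_ofPred_eq, hU]; grind
  have h' := h (f v) v w
  rw [hUVW, mul_comm] at h'
  exact mul_right_cancel₀ hv h'.symm

end CondIndep

namespace NoisyCopies

/-- The law of a copy of the bit `b` sent through a binary symmetric channel with crossover
probability `1/4`. -/
noncomputable def bsc (b x : Bool) : ℝ := if x = b then 3/4 else 1/4

theorem bsc_nonneg (b x : Bool) : 0 ≤ bsc b x := by
  unfold bsc; split_ifs <;> norm_num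

theorem bsc_true_add_bsc_false (b : Bool) : bsc b true + bsc b false = 1 := by
  cases b <;> norm_num [bsc]

theorem sum_prod_bsc (n : ℕ) (b : Bool) : ∑ s : Fin n → Bool, ∏ i, bsc b (s i) = 1 := by
  classical
  simp [← Fintype.prod_sum, bsc_true_add_bsc_false]

variable (n : ℕ)

/-- Joint law of the latent bit `B` (uniform) and its `n + 1` independent noisy copies. -/
noncomputable def latentWeight (ω : Bool × Bool × (Fin n → Bool)) : ℝ :=
  1/2 * bsc ω.1 ω.2.1 * ∏ i, bsc ω.1 (ω.2.2 i)

theorem latentWeight_nonneg : 0 ≤ latentWeight n := fun _ ↦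
  mul_nonneg (mul_nonneg (by norm_num) (bsc_nonneg _ _))
    (Finset.prod_nonneg fun _ _ ↦ bsc_nonneg _ _)

/-- Coordinates `(y, b, x, s)`: label, latent bit, query, context. -/
abbrev Sample := Bool × Bool × Bool × (Fin n → Bool)

noncomputable def μ : Measure (Sample n) := weightedMeasure fun ω ↦ 1/2 * latentWeight n ω.2

variable {n}

def Y (ω : Sample n) : Bool := ω.1
def B (ω : Sample n) : Bool := ω.2.1
def X (ω : Sample n) : Bool := ω.2.2.1
def S (ω : Sample n) : Fin n → Bool := ω.2.2.2
def E (ω : Sample n) : Bool × Bool := (B ω, Y ω)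

theorem weight_nonneg : 0 ≤ fun ω : Sample n ↦ 1/2 * latentWeight n ω.2 := fun ω ↦
  mul_nonneg (by norm_num) (latentWeight_nonneg n _)

instance : IsProbabilityMeasure (μ n) := by
  refine isProbabilityMeasure_weightedMeasure weight_nonneg ?_
  simp [Fintype.sum_prod_type, latentWeight, ← Finset.mul_sum, sum_prod_bsc,
    bsc_true_add_bsc_false]

open Classical in
theorem pr_μ (A : Set (Sample n)) :
    pr (μ n) A = ∑ ω : Sample n, if ω ∈ A then 1/2 * latentWeight n ω.2 else 0 := by
  rw [μ, pr_weightedMeasure weight_nonneg, Finset.sum_filter]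

theorem pr_X_S_E (x : Bool) (s : Fin n → Bool) (e : Bool × Bool) :
    pr (μ n) {ω | X ω = x ∧ (∀ i, S ω i = s i) ∧ E ω = e} =
      1/4 * bsc e.1 x * ∏ i, bsc e.1 (s i) := by
  simp [pr_μ, Fintype.sum_prod_type, X, S, E, B, Y, latentWeight, ite_and, Prod.ext_iff,
    ← funext_iff]
  ring

theorem pr_E (e : Bool × Bool) : pr (μ n) {ω | E ω = e} = 1/4 := by
  simp [pr_μ, Fintype.sum_prod_type, E, B, Y, latentWeight, ite_and, Prod.ext_iff,
    ← Finset.mul_sum, sum_prod_bsc, bsc_true_add_bsc_false]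
  norm_num

theorem pr_E_X (e : Bool × Bool) (x : Bool) :
    pr (μ n) {ω | E ω = e ∧ X ω = x} = 1/4 * bsc e.1 x := by
  simp [pr_μ, Fintype.sum_prod_type, X, E, B, Y, latentWeight, ite_and, Prod.ext_iff,
    ← Finset.mul_sum, sum_prod_bsc]
  ring

theorem pr_X (x : Bool) : pr (μ n) {ω | X ω = x} = 1/2 := by
  simp [pr_μ, Fintype.sum_prod_type, X, latentWeight, ← Finset.mul_sum, sum_prod_bsc]
  cases x <;> norm_num [bsc]

theorem pr_Y_X (y x : Bool) : pr (μ n) {ω | Y ω = y ∧ X ω = x} = 1/4 := by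
  simp [pr_μ, Fintype.sum_prod_type, X, Y, latentWeight, ite_and, ← Finset.mul_sum, sum_prod_bsc]
  cases x <;> norm_num [bsc]

theorem pr_S_X (s : Fin n → Bool) (x : Bool) :
    pr (μ n) {ω | S ω = s ∧ X ω = x} = ∑ b, 1/2 * bsc b x * ∏ i, bsc b (s i) := by
  simp [pr_μ, Fintype.sum_prod_type, X, S, latentWeight, ite_and]

theorem X_S_condIID_given_E (e : Bool × Bool) (x : Bool) (s : Fin n → Bool) :
    pr (μ n) {ω | X ω = x ∧ (∀ i, S ω i = s i) ∧ E ω = e} * pr (μ n) {ω | E ω = e} ^ n =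
      pr (μ n) {ω | X ω = x ∧ E ω = e} * ∏ i, pr (μ n) {ω | X ω = s i ∧ E ω = e} := by
  have hXE (x : Bool) : {ω : Sample n | X ω = x ∧ E ω = e} = {ω | E ω = e ∧ X ω = x} :=
    Set.ext fun _ ↦ and_comm
  simp only [hXE, pr_X_S_E, pr_E, pr_E_X, Finset.prod_mul_distrib, Finset.prod_const,
    Finset.card_univ, Fintype.card_fin]
  ring

theorem condIndep_Y_S_given_X_E : CondIndep (μ n) Y S fun ω ↦ (X ω, E ω) :=
  condIndep_of_eq_comp (W := fun ω ↦ (X ω, E ω)) (fun p ↦ p.2.2) (fun _ ↦ rfl)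

theorem condIndep_Y_S_given_X : CondIndep (μ n) Y S X :=
  condIndep_fst_weightedMeasure_prod (q := fun _ ↦ 1/2) (fun _ ↦ by norm_num)
    (latentWeight_nonneg n) (by norm_num) (fun ω ↦ ω.2.2) (fun ω ↦ ω.2.1)

theorem not_condIndep_Y_E_given_X : ¬ CondIndep (μ n) Y E X := by
  intro h
  have hY := CondIndep.pr_eq_of_eq_comp h (f := Prod.snd) (fun _ ↦ rfl) (v := (true, true))
    (w := true) (by rw [pr_E_X]; norm_num [bsc])
  rw [pr_Y_X, pr_X] at hY
  norm_num at hY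

theorem not_condIndep_E_S_given_X (hn : 0 < n) : ¬ CondIndep (μ n) E S X := by
  intro h
  -- With `E = (1, 1)` and all of `X, S` equal to `1`, the identity reduces to `(3/4)^n = (1/4)^n`.
  have key := h (true, true) (fun _ ↦ true) true
  rw [show {ω | E ω = (true, true) ∧ S ω = (fun _ ↦ true) ∧ X ω = true} =
      {ω | X ω = true ∧ (∀ i, S ω i = true) ∧ E ω = (true, true)} by
    ext; simp only [Set.mem_ofPred_eq, funext_iff]; tauto,
    pr_X_S_E, pr_X, pr_E_X, pr_S_X] at key
  simp only [bsc, if_true, Finset.prod_const, Finset.card_univ, Fintype.card_fin,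
    Fintype.sum_bool, Bool.true_eq_false, if_false] at key
  have hlt : (1/4 : ℝ) ^ n < (3/4) ^ n := pow_lt_pow_left₀ (by norm_num) (by norm_num) hn.ne'
  linarith

end NoisyCopies

open NoisyCopies in
/-- **Insufficiency of Criteria 2.2 and 2.3 for Criterion 2.1** (Appendix B).
For every `n ≥ 1` there exist a probability space, nonempty finite value types,
and random variables `X, Y, E, X₁, …, Xₙ` with context set `S := (X₁, …, Xₙ)`
such that (i) `X, X₁, …, Xₙ` are conditionally i.i.d. given `E`,
(ii) `Y ⟂ S ∣ (X, E)`, (iii) `E` and `S` are NOT conditionally independent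
given `X` (Criterion 2.2 holds), (iv) `Y` and `E` are NOT conditionally
independent given `X` (Criterion 2.3 holds), and yet (v) `Y ⟂ S ∣ X`
(Criterion 2.1 fails). -/
theorem insufficiency_of_criteria (n : ℕ) (hn : 1 ≤ n) :
    ∃ (Ω : Type) (_ : MeasurableSpace Ω) (μ : Measure Ω) (_ : IsProbabilityMeasure μ)
      (𝒳 𝒴 ℰ : Type)
      (_ : Fintype 𝒳) (_ : Nonempty 𝒳) (_ : MeasurableSpace 𝒳)
      (_ : MeasurableSingletonClass 𝒳)
      (_ : Fintype 𝒴) (_ : Nonempty 𝒴) (_ : MeasurableSpace 𝒴)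
      (_ : MeasurableSingletonClass 𝒴)
      (_ : Fintype ℰ) (_ : Nonempty ℰ) (_ : MeasurableSpace ℰ)
      (_ : MeasurableSingletonClass ℰ)
      (X : Ω → 𝒳) (Y : Ω → 𝒴) (E : Ω → ℰ) (Xi : Fin n → Ω → 𝒳),
      Measurable X ∧ Measurable Y ∧ Measurable E ∧ (∀ i, Measurable (Xi i)) ∧
      -- (i) X, X₁, …, Xₙ are conditionally i.i.d. given E
      (∀ (e : ℰ) (x : 𝒳) (xs : Fin n → 𝒳),
        pr μ {ω | X ω = x ∧ (∀ i, Xi i ω = xs i) ∧ E ω = e} *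
            (pr μ {ω | E ω = e}) ^ n =
          pr μ {ω | X ω = x ∧ E ω = e} *
            ∏ i, pr μ {ω | X ω = xs i ∧ E ω = e}) ∧
      -- (ii) Y ⟂ S ∣ (X, E), where S := (X₁, …, Xₙ)
      CondIndep μ Y (fun ω i => Xi i ω) (fun ω => (X ω, E ω)) ∧
      -- (iii) Criterion 2.2 holds: ¬(E ⟂ S ∣ X)
      ¬ CondIndep μ E (fun ω i => Xi i ω) X ∧
      -- (iv) Criterion 2.3 holds: ¬(Y ⟂ E ∣ X)
      ¬ CondIndep μ Y E X ∧
      -- (v) Criterion 2.1 fails: Y ⟂ S ∣ X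
      CondIndep μ Y (fun ω i => Xi i ω) X := by
  refine ⟨Sample n, inferInstance, μ n, inferInstance, Bool, Bool, Bool × Bool,
    inferInstance, inferInstance, inferInstance, inferInstance,
    inferInstance, inferInstance, inferInstance, inferInstance,
    inferInstance, inferInstance, inferInstance, inferInstance,
    X, Y, E, fun i ω ↦ S ω i, .of_discrete, .of_discrete, .of_discrete, fun _ ↦ .of_discrete,
    X_S_condIID_given_E, condIndep_Y_S_given_X_E, not_condIndep_E_S_given_X hn,
    not_condIndep_Y_E_given_X, condIndep_Y_S_given_X⟩
end
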